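/- arXiv:2605.26816 — 2 statements merged into one kernel-verified Lean document; each statement's English description precedes it below -/
import Mathlib

section
/- Fix customers π_{i-1}, π_i with demand q_{π_i} ≥ 0, charging stations f_in, f_out, a label (d^{i-1}, q^{i-1}, b^{i-1}) with q^{i-1} ≥ 0, h > 0, and let F(x, y) denote the shortest-walk distance in the charging graph G on V_f ∪ {δ}. For any battery-feasible intermediate charging sequence σ from f_in to f_out whose stations include the depot δ, the charging-detour label obtained via σ, namely (d^{i-1} + d(π_{i-1}, f_in) + D(σ) + d(f_out, π_i), q^{i-1} + q_{π_i}, h·d(f_out, π_i)) where D(σ) is the inner distance of σ, is componentwise greater than or equal to the depot-detour label with the same pair (f_in, f_out), namely (d^{i-1} + d(π_{i-1}, f_in) + F(f_in, δ) + F(δ, f_out) + d(f_out, π_i), q_{π_i}, h·d(f_out, π_i)). In particular, any charging detour that treats the depot merely as a charging station (without resetting cargo) is dominated by the corresponding depot detour. -/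
/-- Total length of a chain of consecutive legs. -/
def chainLength {V : Type*} (d : V → V → ℝ) : List V → ℝ
  | [] => 0
  | [_] => 0
  | a :: b :: l => d a b + chainLength d (b :: l)

/-- Inner distance of a charging detour through the intermediate stations `σ`. -/
def innerDist {V : Type*} (d : V → V → ℝ) (fIn fOut : V) (σ : List V) : ℝ :=
  chainLength d (fIn :: (σ ++ [fOut]))

/-- Weight of a walk: the sum of `d` over its consecutive edges. -/
def walkWeight {V : Type*} (d : V → V → ℝ) {G : SimpleGraph V} {x y : V}
    (p : G.Walk x y) : ℝ :=
  (p.darts.map fun e => d e.fst e.snd).sum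

/-- The charging graph on the node set `S` (the charging stations together with the depot):
`u` and `v` are adjacent iff `u ≠ v`, both lie in `S`, and `h * d u v ≤ B`. -/
def chargingGraphOn {V : Type*} (d : V → V → ℝ) (hsymm : ∀ u v, d u v = d v u)
    (S : Set V) (h B : ℝ) : SimpleGraph V where
  Adj u v := u ≠ v ∧ u ∈ S ∧ v ∈ S ∧ h * d u v ≤ B
  symm := by
    constructor
    rintro u v ⟨h1, h2, h3, h4⟩
    exact ⟨h1.symm, h3, h2, by rwa [hsymm v u]⟩
  loopless := by constructor; rintro u ⟨h1, -⟩; exact h1 rfl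

/-- Shortest-walk distance between two nodes of a weighted graph. -/
noncomputable def swDist {V : Type*} (d : V → V → ℝ) (G : SimpleGraph V) (x y : V) : ℝ :=
  sInf {r : ℝ | ∃ p : G.Walk x y, r = walkWeight d p}

lemma chainLength_nonneg {V : Type*} (d : V → V → ℝ) (hnn : ∀ u v, 0 ≤ d u v) :
    ∀ l : List V, 0 ≤ chainLength d l
  | [] => le_refl 0
  | [_] => le_refl 0
  | a :: b :: l => add_nonneg (hnn a b) (chainLength_nonneg d hnn (b :: l))

lemma chainLength_split {V : Type*} (d : V → V → ℝ) (x : V) (l2 : List V) :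
    ∀ l1 : List V, chainLength d (l1 ++ x :: l2) =
      chainLength d (l1 ++ [x]) + chainLength d (x :: l2)
  | [] => by simp [chainLength]
  | [a] => by simp [chainLength]
  | a :: b :: t => by
      have ih := chainLength_split d x l2 (b :: t)
      simp only [List.cons_append, chainLength, List.append_eq] at *
      rw [ih]; ring

lemma walkWeight_nonneg {V : Type*} (d : V → V → ℝ) (hnn : ∀ u v, 0 ≤ d u v)
    {G : SimpleGraph V} {x y : V} (p : G.Walk x y) : 0 ≤ walkWeight d p := by
  apply List.sum_nonneg
  intro r hr
  simp only [List.mem_map] at hr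
  obtain ⟨e, -, rfl⟩ := hr
  exact hnn _ _

lemma exists_walk_of_chain {V : Type*} (d : V → V → ℝ) (hsymm : ∀ u v, d u v = d v u)
    (hnn : ∀ u v, 0 ≤ d u v) (S : Set V) (h B : ℝ) :
    ∀ (l : List V) (a b : V), a ∈ S → (∀ x ∈ l, x ∈ S) →
      List.Chain' (fun u v => h * d u v ≤ B) (a :: l) →
      (a :: l).getLast? = some b →
      ∃ p : (chargingGraphOn d hsymm S h B).Walk a b,
        walkWeight d p ≤ chainLength d (a :: l)
  | [], a, b, haS, _, _, hlast => by
      simp only [List.getLast?_singleton, Option.some.injEq] at hlast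
      subst hlast
      exact ⟨SimpleGraph.Walk.nil, by simp [walkWeight, chainLength]⟩
  | c :: t, a, b, haS, hmem, hchain, hlast => by
      have hcS : c ∈ S := hmem c (by simp)
      have hmem' : ∀ x ∈ t, x ∈ S := fun x hx => hmem x (by simp [hx])
      unfold List.Chain' at hchain
      rw [List.isChain_cons_cons] at hchain
      have hlast' : (c :: t).getLast? = some b := by
        rw [List.getLast?_cons_cons] at hlast; exact hlast
      obtain ⟨p, hp⟩ := exists_walk_of_chain d hsymm hnn S h B t c b hcS hmem'
        hchain.2 hlast'
      by_cases hac : a = c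
      · subst hac
        refine ⟨p, hp.trans ?_⟩
        have : chainLength d (a :: a :: t) = d a a + chainLength d (a :: t) := rfl
        rw [this]
        linarith [hnn a a]
      · refine ⟨SimpleGraph.Walk.cons ⟨hac, haS, hcS, hchain.1⟩ p, ?_⟩
        have hw : walkWeight d (SimpleGraph.Walk.cons
            (⟨hac, haS, hcS, hchain.1⟩ : (chargingGraphOn d hsymm S h B).Adj a c) p)
            = d a c + walkWeight d p := by
          rfl
        rw [hw]
        have : chainLength d (a :: c :: t) = d a c + chainLength d (c :: t) := rfl
        rw [this]
        linarith

/-- Any charging detour whose intermediate stations include the depot `δ` (treating the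
depot merely as a charging station, without resetting cargo) is dominated by the
corresponding depot detour with the same pair `(fIn, fOut)`: the depot-detour label
is componentwise less than or equal to the charging-detour label. -/
theorem stmt8 {V : Type*} [Fintype V] [DecidableEq V]
    (δ : V) (Vf : Set V) (d : V → V → ℝ)
    (hsymm : ∀ u v, d u v = d v u) (hnn : ∀ u v, 0 ≤ d u v)
    (h B : ℝ) (hh : 0 < h) (hB : 0 < B)
    (πprev πcur fIn fOut : V)
    (hfin : fIn ∈ insert δ Vf) (hfout : fOut ∈ insert δ Vf)
    (qdem : ℝ) (hqdem : 0 ≤ qdem)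
    (d0 q0 b0 : ℝ) (hq0 : 0 ≤ q0)
    (σ : List V) (hmem : ∀ x ∈ σ, x ∈ insert δ Vf) (hdep : δ ∈ σ)
    (hfeas : List.Chain' (fun u v => h * d u v ≤ B) (fIn :: (σ ++ [fOut]))) :
    (d0 + d πprev fIn +
        (swDist d (chargingGraphOn d hsymm (insert δ Vf) h B) fIn δ +
          swDist d (chargingGraphOn d hsymm (insert δ Vf) h B) δ fOut) + d fOut πcur,
      qdem, h * d fOut πcur)
      ≤ (d0 + d πprev fIn + innerDist d fIn fOut σ + d fOut πcur,
          q0 + qdem, h * d fOut πcur) := by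
  set G := chargingGraphOn d hsymm (insert δ Vf) h B with hG
  obtain ⟨σ1, σ2, rfl⟩ := List.append_of_mem hdep
  -- rewrite the full list as a split around δ
  have hlist : fIn :: ((σ1 ++ δ :: σ2) ++ [fOut])
      = (fIn :: σ1) ++ δ :: (σ2 ++ [fOut]) := by simp
  rw [hlist] at hfeas
  -- split the chain
  unfold List.Chain' at hfeas
  rw [List.isChain_append] at hfeas
  obtain ⟨hc1, hc2, hc3⟩ := hfeas
  -- chain for first half ending in δ
  have hc1' : List.Chain' (fun u v => h * d u v ≤ B) ((fIn :: σ1) ++ [δ]) := by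
    unfold List.Chain'
    rw [List.isChain_append]
    refine ⟨hc1, List.isChain_singleton δ, ?_⟩
    intro x hx y hy
    simp only [List.head?_cons, Option.mem_def, Option.some.injEq] at hy
    subst hy
    exact hc3 x hx δ (by simp)
  -- membership
  have hmem1 : ∀ x ∈ σ1 ++ [δ], x ∈ insert δ Vf := by
    intro x hx
    rcases List.mem_append.mp hx with hx | hx
    · exact hmem x (by simp [hx])
    · simp only [List.mem_singleton] at hx; subst hx; exact Set.mem_insert _ _
  have hmem2 : ∀ x ∈ σ2 ++ [fOut], x ∈ insert δ Vf := by
    intro x hx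
    rcases List.mem_append.mp hx with hx | hx
    · exact hmem x (by simp [hx])
    · simp only [List.mem_singleton] at hx; subst hx; exact hfout
  -- walks
  have h1 := exists_walk_of_chain d hsymm hnn (insert δ Vf) h B (σ1 ++ [δ]) fIn δ
    hfin hmem1 (by simpa using hc1')
    (by rw [show fIn :: (σ1 ++ [δ]) = (fIn :: σ1) ++ [δ] by simp]; exact List.getLast?_concat)
  have h2 := exists_walk_of_chain d hsymm hnn (insert δ Vf) h B (σ2 ++ [fOut]) δ fOut
    (Set.mem_insert _ _) hmem2 hc2
    (by rw [show δ :: (σ2 ++ [fOut]) = (δ :: σ2) ++ [fOut] by simp]; exact List.getLast?_concat)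
  obtain ⟨p1, hp1⟩ := h1
  obtain ⟨p2, hp2⟩ := h2
  have hsw1 : swDist d G fIn δ ≤ chainLength d (fIn :: (σ1 ++ [δ])) := by
    refine le_trans (csInf_le ⟨0, ?_⟩ ⟨p1, rfl⟩) hp1
    rintro r ⟨p, rfl⟩
    exact walkWeight_nonneg d hnn p
  have hsw2 : swDist d G δ fOut ≤ chainLength d (δ :: (σ2 ++ [fOut])) := by
    refine le_trans (csInf_le ⟨0, ?_⟩ ⟨p2, rfl⟩) hp2
    rintro r ⟨p, rfl⟩
    exact walkWeight_nonneg d hnn p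
  have hinner : innerDist d fIn fOut (σ1 ++ δ :: σ2)
      = chainLength d (fIn :: (σ1 ++ [δ])) + chainLength d (δ :: (σ2 ++ [fOut])) := by
    unfold innerDist
    have : fIn :: ((σ1 ++ δ :: σ2) ++ [fOut])
        = (fIn :: σ1) ++ δ :: (σ2 ++ [fOut]) := by simp
    rw [this, chainLength_split]
    simp
  refine Prod.mk_le_mk.mpr ⟨?_, Prod.mk_le_mk.mpr ⟨by linarith, le_refl _⟩⟩
  rw [hinner]
  have := add_le_add hsw1 hsw2
  linarith
end

section
/- Consider the FP-FLA forward labeling algorithm applied to a fixed customer permutation π = (π_1, …, π_n): front_0 = {(0, 0, 0)}, and front_i is obtained from front_{i-1} by generating, for each label, the direct extension and, for every pair (f_in, f_out) of nodes in V_f ∪ {δ}, the charging-detour and depot-detour extensions, discarding extensions violating the feasibility conditions (cargo ≤ Q, battery ≤ B, detour reachability b + h·d(π_{i-1}, f_in) ≤ B), and removing componentwise-dominated labels. Then for every i = 0, 1, …, n and every feasible partial decoding of the prefix (π_1, …, π_i) with resulting state (d, q, b), the set front_i contains a label (d', q', b') with d' ≤ d, q' ≤ q, and b' ≤ b. -/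
namespace FPSCP

/-- An FPSCP instance: depot, customers, charging stations, distances, demands,
battery consumption rate `h`, battery capacity `B` and cargo capacity `Q`. -/
structure Instance (V : Type*) where
  dep : V
  Vc : Finset V
  Vf : Finset V
  dist : V → V → ℝ
  demand : V → ℝ
  h : ℝ
  B : ℝ
  Q : ℝ

variable {V : Type*} [DecidableEq V]

/-- A label of the FP-FLA algorithm: (total distance, cargo used since the most recent
depot visit, battery consumed since the most recent recharge). -/
abbrev Label : Type := ℝ × ℝ × ℝ

/-- Weight of a walk: the sum of `d` over its consecutive edges. -/
def walkWeight (d : V → V → ℝ) {G : SimpleGraph V} {x y : V} (p : G.Walk x y) : ℝ :=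
  (p.darts.map fun e => d e.fst e.snd).sum

/-- The charging stations together with the depot. -/
def stations (P : Instance V) : Finset V := insert P.dep P.Vf

/-- The charging graph `G` on `V_f ∪ {δ}`: `u` and `v` are adjacent iff `u ≠ v`,
both are recharge nodes, and `h * d u v ≤ B`. -/
def chargingGraph (P : Instance V) (hsymm : ∀ u v, P.dist u v = P.dist v u) :
    SimpleGraph V where
  Adj u v := u ≠ v ∧ u ∈ stations P ∧ v ∈ stations P ∧ P.h * P.dist u v ≤ P.B
  symm := by
    constructor
    rintro u v ⟨h1, h2, h3, h4⟩
    exact ⟨h1.symm, h3, h2, by rwa [hsymm v u]⟩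
  loopless := by constructor; rintro u ⟨h1, -⟩; exact h1 rfl

/-- `F x y`: shortest-walk distance between `x` and `y` in the charging graph. -/
noncomputable def F (P : Instance V) (hsymm : ∀ u v, P.dist u v = P.dist v u)
    (x y : V) : ℝ :=
  sInf {r : ℝ | ∃ p : (chargingGraph P hsymm).Walk x y, r = walkWeight P.dist p}

/-- State update when traversing the leg from `u` to `v`: distance accumulates, cargo
resets at the depot and otherwise accumulates the demand of `v`, and the battery
consumption resets upon departure from a recharge node. -/
def step (P : Instance V) (L : Label) (u v : V) : Label :=
  (L.1 + P.dist u v,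
    if v = P.dep then 0 else L.2.1 + P.demand v,
    (if u = P.dep ∨ u ∈ P.Vf then 0 else L.2.2) + P.h * P.dist u v)

/-- The state reached after traversing a node sequence, starting from state `L` at `u`. -/
def runState (P : Instance V) : Label → V → List V → Label
  | L, _, [] => L
  | L, u, v :: rest => runState P (step P L u v) v rest

/-- Feasibility of a node sequence: at every arrival the cargo used since the most recent
depot visit is at most `Q` and the battery consumed since the most recent recharge is at
most `B`. -/
def runOK (P : Instance V) : Label → V → List V → Prop
  | _, _, [] => True
  | L, u, v :: rest =>
      (step P L u v).2.1 ≤ P.Q ∧ (step P L u v).2.2 ≤ P.B ∧ runOK P (step P L u v) v rest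

/-- A feasible partial decoding of the prefix `pre` of the customer permutation:
`rest` is the node sequence following the initial depot; all its nodes are customers,
charging stations or the depot; its customer subsequence is exactly `pre`; it ends at the
last customer of `pre`; and the cargo and battery constraints hold throughout. -/
def PartialDecoding (P : Instance V) (pre rest : List V) : Prop :=
  (∀ v ∈ rest, v ∈ P.Vc ∨ v ∈ P.Vf ∨ v = P.dep) ∧
  rest.filter (fun v => decide (v ∈ P.Vc)) = pre ∧
  rest.getLast? = pre.getLast? ∧
  runOK P (0, 0, 0) P.dep rest

/-- A feasible (complete) decoding of the customer permutation `π`: `rest` is the node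
sequence following the initial depot; it ends at the depot; its customer subsequence is
exactly `π`; and the cargo and battery constraints hold throughout. -/
def FullDecoding (P : Instance V) (π rest : List V) : Prop :=
  (∀ v ∈ rest, v ∈ P.Vc ∨ v ∈ P.Vf ∨ v = P.dep) ∧
  rest.filter (fun v => decide (v ∈ P.Vc)) = π ∧
  rest.getLast? = some P.dep ∧
  runOK P (0, 0, 0) P.dep rest

/-- Direct extension of a label from `prev` to `next`. -/
def directExt (P : Instance V) (prev next : V) (L : Label) : Label :=
  (L.1 + P.dist prev next, L.2.1 + P.demand next, L.2.2 + P.h * P.dist prev next)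

/-- Charging-detour extension of a label from `prev` to `next`, entering the charging
network at `fIn` and leaving it at `fOut`. -/
noncomputable def chargeExt (P : Instance V) (hsymm : ∀ u v, P.dist u v = P.dist v u)
    (prev next fIn fOut : V) (L : Label) : Label :=
  (L.1 + P.dist prev fIn + F P hsymm fIn fOut + P.dist fOut next,
    L.2.1 + P.demand next, P.h * P.dist fOut next)

/-- Depot-detour extension of a label from `prev` to `next`, entering the charging
network at `fIn`, visiting the depot, and leaving the network at `fOut`. -/
noncomputable def depotExt (P : Instance V) (hsymm : ∀ u v, P.dist u v = P.dist v u)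
    (prev next fIn fOut : V) (L : Label) : Label :=
  (L.1 + P.dist prev fIn + F P hsymm fIn P.dep + F P hsymm P.dep fOut + P.dist fOut next,
    P.demand next, P.h * P.dist fOut next)

/-- The set of feasible candidate labels generated from a label `L` at `prev` when moving
to `next`: the direct extension and, for every pair `(fIn, fOut)` of recharge nodes, the
charging-detour and depot-detour extensions, subject to the feasibility conditions
(cargo ≤ Q, battery ≤ B, detour reachability `b + h·d(prev, fIn) ≤ B`, and existence of
the corresponding battery-feasible station sequences). -/
def candidates (P : Instance V) (hsymm : ∀ u v, P.dist u v = P.dist v u)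
    (prev next : V) (L : Label) : Set Label :=
  {L' | (L' = directExt P prev next L ∧ L'.2.1 ≤ P.Q ∧ L'.2.2 ≤ P.B) ∨
    (∃ fIn fOut, fIn ∈ stations P ∧ fOut ∈ stations P ∧
      L.2.2 + P.h * P.dist prev fIn ≤ P.B ∧
      ((L' = chargeExt P hsymm prev next fIn fOut L ∧
          Nonempty ((chargingGraph P hsymm).Walk fIn fOut) ∧
          L'.2.1 ≤ P.Q ∧ L'.2.2 ≤ P.B) ∨
       (L' = depotExt P hsymm prev next fIn fOut L ∧
          Nonempty ((chargingGraph P hsymm).Walk fIn P.dep) ∧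
          Nonempty ((chargingGraph P hsymm).Walk P.dep fOut) ∧
          L'.2.1 ≤ P.Q ∧ L'.2.2 ≤ P.B)))}

/-- Removing componentwise-dominated labels: keep the componentwise-minimal elements. -/
def minimalOnly (S : Set Label) : Set Label :=
  {x ∈ S | ∀ y ∈ S, y ≤ x → x ≤ y}

/-- One step of the FP-FLA front recursion. -/
noncomputable def nextFront (P : Instance V) (hsymm : ∀ u v, P.dist u v = P.dist v u)
    (prev next : V) (Fr : Set Label) : Set Label :=
  minimalOnly {L' | ∃ L ∈ Fr, L' ∈ candidates P hsymm prev next L}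

/-- The FP-FLA front obtained from the front `Fr` at node `prev` after processing the
remaining node list. -/
noncomputable def fronts (P : Instance V) (hsymm : ∀ u v, P.dist u v = P.dist v u) :
    V → List V → Set Label → Set Label
  | _, [], Fr => Fr
  | prev, c :: rest, Fr => fronts P hsymm c rest (nextFront P hsymm prev c Fr)

/-- The initial front, containing the single label `(0, 0, 0)`. -/
def initFront : Set Label := {((0 : ℝ), (0 : ℝ), (0 : ℝ))}



section Aux

set_option linter.unusedSectionVars false

variable (P : Instance V)

/-- Total distance of the chain starting at `u` through the list `l`. -/
def chainFrom (u : V) : List V → ℝ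
  | [] => 0
  | v :: t => P.dist u v + chainFrom v t

lemma chainFrom_nonneg (hnn : ∀ u v, 0 ≤ P.dist u v) (u : V) (l : List V) :
    0 ≤ chainFrom P u l := by
  induction l generalizing u with
  | nil => simp [chainFrom]
  | cons v t ih => simpa [chainFrom] using add_nonneg (hnn u v) (ih v)

lemma chainFrom_append (u : V) (a b : List V) :
    chainFrom P u (a ++ b) = chainFrom P u a + chainFrom P (a.getLastD u) b := by
  induction a generalizing u with
  | nil => simp [chainFrom]
  | cons x t ih => simp only [List.cons_append, chainFrom, List.append_eq, ih x, List.getLastD_cons, add_assoc]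

lemma getLastD_append_cons (l₁ : List V) (x : V) (l₂ : List V) (d : V) :
    (l₁ ++ x :: l₂).getLastD d = l₂.getLastD x := by
  induction l₁ generalizing d with
  | nil => rw [List.nil_append, List.getLastD_cons]
  | cons a t ih => rw [List.cons_append, List.getLastD_cons, ih]

lemma mem_stations_iff {x : V} : x ∈ stations P ↔ x = P.dep ∨ x ∈ P.Vf := by
  simp [stations]

lemma runState_append (L : Label) (u : V) (a b : List V) :
    runState P L u (a ++ b) = runState P (runState P L u a) (a.getLastD u) b := by
  induction a generalizing L u with
  | nil => rfl
  | cons x t ih =>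
    simp only [List.cons_append, runState, List.getLastD_cons]
    exact ih (step P L u x) x

lemma runOK_append (L : Label) (u : V) (a b : List V) :
    runOK P L u (a ++ b) ↔ runOK P L u a ∧ runOK P (runState P L u a) (a.getLastD u) b := by
  induction a generalizing L u with
  | nil => simp [runOK, runState]
  | cons x t ih =>
    simp only [List.cons_append, runOK, runState, List.append_eq, List.getLastD_cons, ih, and_assoc]

lemma runOK_final (l : List V) : ∀ (L : Label) (u : V), l ≠ [] → runOK P L u l →
    (runState P L u l).2.1 ≤ P.Q ∧ (runState P L u l).2.2 ≤ P.B := by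
  induction l with
  | nil => intro L u hl _; exact absurd rfl hl
  | cons x t ih =>
    intro L u _ h
    rcases t with _ | ⟨y, t'⟩
    · exact ⟨h.1, h.2.1⟩
    · exact ih (step P L u x) x (by simp) h.2.2

lemma walkWeight_nonneg (hnn : ∀ u v, 0 ≤ P.dist u v) {G : SimpleGraph V} {x y : V}
    (p : G.Walk x y) : 0 ≤ walkWeight P.dist p := by
  refine List.sum_nonneg ?_
  intro r hr
  obtain ⟨e, -, rfl⟩ := List.mem_map.1 hr
  exact hnn _ _

lemma F_le_walk (hsymm : ∀ u v, P.dist u v = P.dist v u) (hnn : ∀ u v, 0 ≤ P.dist u v)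
    {x y : V} (p : (chargingGraph P hsymm).Walk x y) :
    F P hsymm x y ≤ walkWeight P.dist p :=
  csInf_le ⟨0, by rintro r ⟨q, rfl⟩; exact walkWeight_nonneg P hnn q⟩ ⟨p, rfl⟩

lemma exists_walk (hsymm : ∀ u v, P.dist u v = P.dist v u) (hnn : ∀ u v, 0 ≤ P.dist u v)
    (S : List V) : ∀ (u : V), (∀ x ∈ u :: S, x ∈ stations P) →
    List.Chain' (fun a b => P.h * P.dist a b ≤ P.B) (u :: S) →
    ∃ p : (chargingGraph P hsymm).Walk u (S.getLastD u),
      walkWeight P.dist p ≤ chainFrom P u S := by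
  induction S with
  | nil =>
    intro u _ _
    exact ⟨SimpleGraph.Walk.nil, le_of_eq rfl⟩
  | cons s S' ih =>
    intro u hmem hch
    have hm' : ∀ x ∈ s :: S', x ∈ stations P := fun x hx => hmem x (List.mem_cons_of_mem _ hx)
    unfold List.Chain' at hch
    rw [List.isChain_cons_cons] at hch
    obtain ⟨hus', hch'⟩ := hch
    obtain ⟨p, hp⟩ := ih s hm' hch'
    rw [List.getLastD_cons]
    by_cases hus : u = s
    · subst hus
      refine ⟨p, ?_⟩
      simp only [chainFrom]
      exact hp.trans (le_add_of_nonneg_left (hnn u u))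
    · have hadj : (chargingGraph P hsymm).Adj u s :=
        ⟨hus, hmem u (List.mem_cons_self),
          hmem s (List.mem_cons_of_mem _ (List.mem_cons_self)), hus'⟩
      refine ⟨SimpleGraph.Walk.cons hadj p, ?_⟩
      simp only [chainFrom, walkWeight, SimpleGraph.Walk.darts_cons, List.map_cons, List.sum_cons]
      exact add_le_add_right hp _

lemma runSeg (hdemVf : ∀ v ∈ P.Vf, P.demand v = 0) (c : V) (hc : c ≠ P.dep) (S : List V) :
    ∀ (L : Label) (u : V), u ∈ stations P → (∀ x ∈ S, x ∈ stations P) →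
    runState P L u (S ++ [c]) =
      (L.1 + chainFrom P u (S ++ [c]),
       (if P.dep ∈ S then 0 else L.2.1) + P.demand c,
       P.h * P.dist (S.getLastD u) c) := by
  induction S with
  | nil =>
    intro L u hu _
    have hflag : u = P.dep ∨ u ∈ P.Vf := (mem_stations_iff P).1 hu
    simp [runState, step, chainFrom, hc, hflag]
  | cons s S' ih =>
    intro L u hu hS
    have hs : s ∈ stations P := hS s (List.mem_cons_self)
    have hS' : ∀ x ∈ S', x ∈ stations P := fun x hx => hS x (List.mem_cons_of_mem _ hx)
    have hflag : u = P.dep ∨ u ∈ P.Vf := (mem_stations_iff P).1 hu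
    have hstep : step P L u s =
        (L.1 + P.dist u s, if s = P.dep then 0 else L.2.1, P.h * P.dist u s) := by
      by_cases hsd : s = P.dep
      · simp [step, hsd, hflag]
      · have hsf : s ∈ P.Vf := ((mem_stations_iff P).1 hs).resolve_left hsd
        simp [step, hsd, hflag, hdemVf s hsf]
    rw [show (s :: S') ++ [c] = s :: (S' ++ [c]) from rfl]
    simp only [runState]
    rw [ih (step P L u s) s hs hS', hstep]
    refine Prod.ext ?_ (Prod.ext ?_ ?_)
    · simp [chainFrom, add_assoc]
    · by_cases h1 : P.dep ∈ S' <;> by_cases h2 : s = P.dep <;>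
        simp [List.mem_cons, h1, h2, eq_comm]
    · rw [List.getLastD_cons]

lemma runOK_chain' (c : V) (S : List V) : ∀ (L : Label) (u : V), u ∈ stations P →
    (∀ x ∈ S, x ∈ stations P) → runOK P L u (S ++ [c]) →
    List.Chain' (fun a b => P.h * P.dist a b ≤ P.B) (u :: S) := by
  induction S with
  | nil => intro L u _ _ _; exact List.isChain_singleton u
  | cons s S' ih =>
    intro L u hu hS h
    have hflag : u = P.dep ∨ u ∈ P.Vf := (mem_stations_iff P).1 hu
    unfold List.Chain'
    rw [List.isChain_cons_cons]
    rw [show (s :: S') ++ [c] = s :: (S' ++ [c]) from rfl] at h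
    refine ⟨?_, ih (step P L u s) s (hS s (List.mem_cons_self))
      (fun x hx => hS x (List.mem_cons_of_mem _ hx)) h.2.2⟩
    have hb := h.2.1
    simpa [step, hflag] using hb

lemma depot_key (hsymm : ∀ u v, P.dist u v = P.dist v u) (hnn : ∀ u v, 0 ≤ P.dist u v)
    (s : V) (S' : List V) (hdep : P.dep ∈ s :: S')
    (hmem : ∀ x ∈ s :: S', x ∈ stations P)
    (hchain : List.Chain' (fun a b => P.h * P.dist a b ≤ P.B) (s :: S')) :
    F P hsymm s P.dep + F P hsymm P.dep (S'.getLastD s) ≤ chainFrom P s S' ∧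
    Nonempty ((chargingGraph P hsymm).Walk s P.dep) ∧
    Nonempty ((chargingGraph P hsymm).Walk P.dep (S'.getLastD s)) := by
  obtain ⟨A, B, hAB⟩ := List.append_of_mem hdep
  rcases A with _ | ⟨a, A'⟩
  · rw [List.nil_append] at hAB
    injection hAB with h1 h2
    subst h1; subst h2
    obtain ⟨p2, hp2⟩ := exists_walk P hsymm hnn S' P.dep hmem hchain
    have hF1 : F P hsymm P.dep P.dep ≤ 0 := by
      simpa [walkWeight] using F_le_walk P hsymm hnn (SimpleGraph.Walk.nil (u := P.dep))
    have hF2 : F P hsymm P.dep (S'.getLastD P.dep) ≤ chainFrom P P.dep S' :=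
      (F_le_walk P hsymm hnn p2).trans hp2
    exact ⟨by linarith, ⟨SimpleGraph.Walk.nil⟩, ⟨p2⟩⟩
  · rw [List.cons_append] at hAB
    injection hAB with h1 h2
    subst h1; subst h2
    have hpre : (s :: (A' ++ [P.dep])) <+: (s :: (A' ++ P.dep :: B)) :=
      ⟨B, by simp⟩
    have hsuf : (P.dep :: B) <:+ (s :: (A' ++ P.dep :: B)) :=
      ⟨s :: A', by simp⟩
    have hmem1 : ∀ x ∈ s :: (A' ++ [P.dep]), x ∈ stations P := by
      intro x hx
      rcases List.mem_cons.1 hx with rfl | hx'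
      · exact hmem x (List.mem_cons_self)
      · rcases List.mem_append.1 hx' with hx'' | hx''
        · exact hmem x (List.mem_cons_of_mem _ (List.mem_append_left _ hx''))
        · rw [List.mem_singleton.1 hx'']
          exact (mem_stations_iff P).2 (Or.inl rfl)
    have hmem2 : ∀ x ∈ P.dep :: B, x ∈ stations P := by
      intro x hx
      rcases List.mem_cons.1 hx with rfl | hx'
      · exact (mem_stations_iff P).2 (Or.inl rfl)
      · exact hmem x (List.mem_cons_of_mem _
          (List.mem_append_right _ (List.mem_cons_of_mem _ hx')))
    have hex1 := exists_walk P hsymm hnn (A' ++ [P.dep]) s hmem1 (hchain.prefix hpre)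
    rw [List.getLastD_concat] at hex1
    obtain ⟨p1, hp1⟩ := hex1
    obtain ⟨p2, hp2⟩ := exists_walk P hsymm hnn B P.dep hmem2 (hchain.suffix hsuf)
    have htB : (A' ++ P.dep :: B).getLastD s = B.getLastD P.dep := getLastD_append_cons _ _ _ _
    have hF1 : F P hsymm s P.dep ≤ chainFrom P s (A' ++ [P.dep]) :=
      (F_le_walk P hsymm hnn p1).trans hp1
    have hF2 : F P hsymm P.dep ((A' ++ P.dep :: B).getLastD s) ≤ chainFrom P P.dep B := by
      rw [htB]; exact (F_le_walk P hsymm hnn p2).trans hp2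
    have hsplit : chainFrom P s (A' ++ P.dep :: B) =
        chainFrom P s (A' ++ [P.dep]) + chainFrom P P.dep B := by
      rw [show A' ++ P.dep :: B = (A' ++ [P.dep]) ++ B by simp,
        chainFrom_append, List.getLastD_concat]
    exact ⟨by linarith, ⟨p1⟩, ⟨htB ▸ p2⟩⟩

lemma seg (hsymm : ∀ u v, P.dist u v = P.dist v u) (hnn : ∀ u v, 0 ≤ P.dist u v)
    (hdemVf : ∀ v ∈ P.Vf, P.demand v = 0)
    (L0 : Label) (prev : V)
    (hflag : (if prev = P.dep ∨ prev ∈ P.Vf then 0 else L0.2.2) = L0.2.2)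
    (S : List V) (hS : ∀ x ∈ S, x ∈ stations P) (c : V) (hc : c ≠ P.dep)
    (hok : runOK P L0 prev (S ++ [c])) :
    ∃ L' ∈ candidates P hsymm prev c L0, L' ≤ runState P L0 prev (S ++ [c]) := by
  obtain ⟨hQf, hBf⟩ := runOK_final P (S ++ [c]) L0 prev (by simp) hok
  rcases S with _ | ⟨s, S'⟩
  · -- direct extension
    refine ⟨runState P L0 prev ([] ++ [c]), Or.inl ⟨?_, hQf, hBf⟩, le_refl _⟩
    show runState P (step P L0 prev c) c [] = _
    simp only [runState, step, directExt, if_neg hc, hflag]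
  · -- detour
    have hs : s ∈ stations P := hS s (List.mem_cons_self)
    have hS' : ∀ x ∈ S', x ∈ stations P := fun x hx => hS x (List.mem_cons_of_mem _ hx)
    have hok' : runOK P (step P L0 prev s) s (S' ++ [c]) := hok.2.2
    have hreach : L0.2.2 + P.h * P.dist prev s ≤ P.B := by
      have hb := hok.2.1
      simp only [step] at hb
      rwa [hflag] at hb
    have hrun : runState P L0 prev ((s :: S') ++ [c]) =
        ((step P L0 prev s).1 + chainFrom P s (S' ++ [c]),
         (if P.dep ∈ S' then 0 else (step P L0 prev s).2.1) + P.demand c,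
         P.h * P.dist (S'.getLastD s) c) := by
      rw [show (s :: S') ++ [c] = s :: (S' ++ [c]) from rfl]
      show runState P (step P L0 prev s) s (S' ++ [c]) = _
      exact runSeg P hdemVf c hc S' (step P L0 prev s) s hs hS'
    have hchain : List.Chain' (fun a b => P.h * P.dist a b ≤ P.B) (s :: S') :=
      runOK_chain' P c S' (step P L0 prev s) s hs hS' hok'
    have hchsplit : chainFrom P s (S' ++ [c]) =
        chainFrom P s S' + P.dist (S'.getLastD s) c := by
      rw [chainFrom_append]
      simp [chainFrom]
    have htmem : S'.getLastD s ∈ stations P := by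
      rcases S'.eq_nil_or_concat with rfl | ⟨l, b, hS2⟩
      · exact hs
      · rw [hS2, List.concat_eq_append, List.getLastD_concat]
        exact hS' b (by rw [hS2]; simp)
    have hstep1 : (step P L0 prev s).1 = L0.1 + P.dist prev s := rfl
    by_cases hdep : P.dep ∈ s :: S'
    · -- depot detour
      obtain ⟨hFsum, hw1, hw2⟩ := depot_key P hsymm hnn s S' hdep (fun x hx => hS x hx) hchain
      have hcargo : (if P.dep ∈ S' then 0 else (step P L0 prev s).2.1) = 0 := by
        rcases List.mem_cons.1 hdep with h1 | h1
        · by_cases h2 : P.dep ∈ S'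
          · simp [h2]
          · simp [h2, step, ← h1]
        · simp [h1]
      refine ⟨depotExt P hsymm prev c s (S'.getLastD s) L0,
        Or.inr ⟨s, S'.getLastD s, hs, htmem, hreach, Or.inr ⟨rfl, hw1, hw2, ?_, ?_⟩⟩, ?_⟩
      · show P.demand c ≤ P.Q
        have h := hQf
        rw [hrun] at h
        simp only [hcargo, zero_add] at h
        exact h
      · show P.h * P.dist (S'.getLastD s) c ≤ P.B
        have h := hBf
        rw [hrun] at h
        exact h
      · rw [hrun, hcargo, hstep1, hchsplit, zero_add]
        refine ⟨?_, le_refl _, le_refl _⟩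
        show L0.1 + P.dist prev s + F P hsymm s P.dep + F P hsymm P.dep (S'.getLastD s) +
          P.dist (S'.getLastD s) c ≤ L0.1 + P.dist prev s +
            (chainFrom P s S' + P.dist (S'.getLastD s) c)
        linarith
    · -- charging detour
      have hsd : s ≠ P.dep := fun h => hdep (h ▸ List.mem_cons_self)
      have hdS' : P.dep ∉ S' := fun h => hdep (List.mem_cons_of_mem _ h)
      obtain ⟨p, hp⟩ := exists_walk P hsymm hnn S' s (fun x hx => hS x hx) hchain
      have hF : F P hsymm s (S'.getLastD s) ≤ chainFrom P s S' :=
        (F_le_walk P hsymm hnn p).trans hp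
      have hcargo : (if P.dep ∈ S' then 0 else (step P L0 prev s).2.1) = L0.2.1 := by
        have hsf : s ∈ P.Vf := ((mem_stations_iff P).1 hs).resolve_left hsd
        rw [if_neg hdS']
        simp [step, hsd, hdemVf s hsf]
      refine ⟨chargeExt P hsymm prev c s (S'.getLastD s) L0,
        Or.inr ⟨s, S'.getLastD s, hs, htmem, hreach, Or.inl ⟨rfl, ⟨p⟩, ?_, ?_⟩⟩, ?_⟩
      · show L0.2.1 + P.demand c ≤ P.Q
        have h := hQf
        rw [hrun, hcargo] at h
        exact h
      · show P.h * P.dist (S'.getLastD s) c ≤ P.B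
        have h := hBf
        rw [hrun] at h
        exact h
      · rw [hrun, hcargo, hstep1, hchsplit]
        refine ⟨?_, le_refl _, le_refl _⟩
        show L0.1 + P.dist prev s + F P hsymm s (S'.getLastD s) + P.dist (S'.getLastD s) c ≤
          L0.1 + P.dist prev s + (chainFrom P s S' + P.dist (S'.getLastD s) c)
        linarith

lemma candidates_mono (hsymm : ∀ u v, P.dist u v = P.dist v u) (prev next : V)
    {Lf L0 : Label} (hle : Lf ≤ L0) {L' : Label}
    (h : L' ∈ candidates P hsymm prev next L0) :
    ∃ L'' ∈ candidates P hsymm prev next Lf, L'' ≤ L' := by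
  have h1le : Lf.1 ≤ L0.1 := hle.1
  have h2le : Lf.2.1 ≤ L0.2.1 := hle.2.1
  have h3le : Lf.2.2 ≤ L0.2.2 := hle.2.2
  rcases h with ⟨rfl, hq, hb⟩ | ⟨fIn, fOut, hin, hout, hreach, hcase⟩
  · have hdom : directExt P prev next Lf ≤ directExt P prev next L0 :=
      ⟨add_le_add_left h1le _, add_le_add_left h2le _, add_le_add_left h3le _⟩
    exact ⟨_, Or.inl ⟨rfl, le_trans hdom.2.1 hq, le_trans hdom.2.2 hb⟩, hdom⟩
  · have hreach' : Lf.2.2 + P.h * P.dist prev fIn ≤ P.B :=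
      le_trans (add_le_add_left h3le _) hreach
    rcases hcase with ⟨rfl, hne, hq, hb⟩ | ⟨rfl, hne1, hne2, hq, hb⟩
    · have hdom : chargeExt P hsymm prev next fIn fOut Lf ≤
          chargeExt P hsymm prev next fIn fOut L0 :=
        ⟨by dsimp only [chargeExt]
            exact add_le_add_left (add_le_add_left (add_le_add_left h1le _) _) _,
         add_le_add_left h2le _, le_refl _⟩
      exact ⟨_, Or.inr ⟨fIn, fOut, hin, hout, hreach',
        Or.inl ⟨rfl, hne, le_trans hdom.2.1 hq, le_trans hdom.2.2 hb⟩⟩, hdom⟩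
    · have hdom : depotExt P hsymm prev next fIn fOut Lf ≤
          depotExt P hsymm prev next fIn fOut L0 :=
        ⟨by dsimp only [depotExt]
            exact add_le_add_left (add_le_add_left (add_le_add_left
              (add_le_add_left h1le _) _) _) _,
         le_refl _, le_refl _⟩
      exact ⟨_, Or.inr ⟨fIn, fOut, hin, hout, hreach',
        Or.inr ⟨rfl, hne1, hne2, le_trans hdom.2.1 hq, le_trans hdom.2.2 hb⟩⟩, hdom⟩

lemma exists_minimal_le {S : Set Label} (hS : S.Finite) {x : Label} (hx : x ∈ S) :
    ∃ y ∈ minimalOnly S, y ≤ x := by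
  have hT : {y | y ∈ S ∧ y ≤ x}.Finite := hS.subset fun y hy => hy.1
  have hne : hT.toFinset.Nonempty := ⟨x, by simp [hx]⟩
  obtain ⟨m, hm, hmin⟩ := hT.toFinset.exists_minimal hne
  rw [Set.Finite.mem_toFinset] at hm
  refine ⟨m, ⟨hm.1, fun y hy hym => ?_⟩, hm.2⟩
  by_contra hmy
  exact hmy (hmin (by simp only [Set.Finite.mem_toFinset]; exact ⟨hy, hym.trans hm.2⟩) hym)

lemma candidates_finite (hsymm : ∀ u v, P.dist u v = P.dist v u) (prev next : V) (L : Label) :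
    (candidates P hsymm prev next L).Finite := by
  apply Set.Finite.subset (s := insert (directExt P prev next L)
    (⋃ fIn ∈ (stations P : Set V), ⋃ fOut ∈ (stations P : Set V),
      {chargeExt P hsymm prev next fIn fOut L, depotExt P hsymm prev next fIn fOut L}))
  · exact Set.Finite.insert _ ((stations P).finite_toSet.biUnion fun _ _ =>
      (stations P).finite_toSet.biUnion fun _ _ =>
        (Set.finite_singleton _).insert _)
  · rintro L' (⟨rfl, -, -⟩ | ⟨fIn, fOut, hin, hout, -, (⟨rfl, -⟩ | ⟨rfl, -⟩)⟩)
    · exact Set.mem_insert _ _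
    · exact Set.mem_insert_of_mem _ (Set.mem_biUnion (Finset.mem_coe.2 hin)
        (Set.mem_biUnion (Finset.mem_coe.2 hout) (Set.mem_insert _ _)))
    · exact Set.mem_insert_of_mem _ (Set.mem_biUnion (Finset.mem_coe.2 hin)
        (Set.mem_biUnion (Finset.mem_coe.2 hout)
          (Set.mem_insert_of_mem _ (Set.mem_singleton _))))

lemma genSet_finite (hsymm : ∀ u v, P.dist u v = P.dist v u) (prev next : V)
    {Fr : Set Label} (h : Fr.Finite) :
    {L' | ∃ L ∈ Fr, L' ∈ candidates P hsymm prev next L}.Finite := by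
  have h2 := h.biUnion (fun L (_ : L ∈ Fr) => candidates_finite P hsymm prev next L)
  refine h2.subset ?_
  rintro L' ⟨L, hL, hc⟩
  exact Set.mem_biUnion hL hc

lemma nextFront_finite (hsymm : ∀ u v, P.dist u v = P.dist v u) (prev next : V)
    {Fr : Set Label} (h : Fr.Finite) :
    (nextFront P hsymm prev next Fr).Finite :=
  (genSet_finite P hsymm prev next h).subset fun _ hx => hx.1

lemma fronts_finite (hsymm : ∀ u v, P.dist u v = P.dist v u) (l : List V) :
    ∀ (u : V) {Fr : Set Label}, Fr.Finite → (fronts P hsymm u l Fr).Finite := by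
  induction l with
  | nil => intro u Fr h; simpa only [fronts] using h
  | cons c t ih =>
    intro u Fr h
    simp only [fronts]
    exact ih c (nextFront_finite P hsymm u c h)

lemma fronts_append (hsymm : ∀ u v, P.dist u v = P.dist v u) (c : V) (l : List V) :
    ∀ (u : V) (Fr : Set Label),
    fronts P hsymm u (l ++ [c]) Fr =
      nextFront P hsymm (l.getLastD u) c (fronts P hsymm u l Fr) := by
  induction l with
  | nil => intro u Fr; rfl
  | cons a t ih =>
    intro u Fr
    simp only [List.cons_append, fronts, List.getLastD_cons]
    exact ih a _

lemma filter_split (p : V → Bool) : ∀ (l m : List V) (x : V),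
    l.filter p = m ++ [x] →
    ∃ a b, l = a ++ x :: b ∧ a.filter p = m ∧ b.filter p = [] := by
  intro l
  induction l with
  | nil => intro m x h; simp at h
  | cons y t ih =>
    intro m x h
    by_cases hp : p y = true
    · rw [List.filter_cons_of_pos hp] at h
      rcases m with _ | ⟨z, m'⟩
      · rw [List.nil_append] at h
        injection h with h1 h2
        exact ⟨[], t, by rw [h1, List.nil_append], by simp, h2⟩
      · rw [List.cons_append] at h
        injection h with h1 h2
        obtain ⟨a, b, rfl, hfa, hfb⟩ := ih m' x h2
        exact ⟨y :: a, b, rfl, by rw [List.filter_cons_of_pos hp, hfa, h1], hfb⟩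
    · rw [List.filter_cons_of_neg (by simpa using hp)] at h
      obtain ⟨a, b, rfl, hfa, hfb⟩ := ih m x h
      exact ⟨y :: a, b, rfl, by rw [List.filter_cons_of_neg (by simpa using hp), hfa], hfb⟩

end Aux

/-- Completeness of the FP-FLA fronts: for every prefix `pre` of the customer permutation
`π` and every feasible partial decoding of `pre` with resulting state `(d, q, b)`, the
FP-FLA front obtained after processing `pre` contains a label `(d', q', b')` with
`d' ≤ d`, `q' ≤ q` and `b' ≤ b`. -/
theorem stmt10 {V : Type*} [DecidableEq V] [Fintype V] (P : Instance V)
    (hsymm : ∀ u v, P.dist u v = P.dist v u) (hnn : ∀ u v, 0 ≤ P.dist u v)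
    (hdem : ∀ v, 0 ≤ P.demand v) (hdemDep : P.demand P.dep = 0)
    (hdemVf : ∀ v ∈ P.Vf, P.demand v = 0)
    (hh : 0 < P.h) (hB : 0 < P.B) (hQ : 0 < P.Q)
    (hdepC : P.dep ∉ P.Vc) (hdepF : P.dep ∉ P.Vf) (hdisj : Disjoint P.Vc P.Vf)
    (π : List V) (hnd : π.Nodup) (hcust : ∀ c, c ∈ π ↔ c ∈ P.Vc) :
    ∀ pre suf : List V, π = pre ++ suf →
      ∀ rest : List V, PartialDecoding P pre rest →
        ∃ L ∈ fronts P hsymm P.dep pre initFront,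
          L ≤ runState P (0, 0, 0) P.dep rest := by
  intro pre suf hps
  have hpre : ∀ x ∈ pre, x ∈ P.Vc := fun x hx =>
    (hcust x).1 (by rw [hps]; exact List.mem_append_left _ hx)
  clear hps hnd hcust
  induction pre using List.reverseRecOn with
  | nil =>
    intro rest hdec
    obtain ⟨hmem, hfil, hlast, hok⟩ := hdec
    have hrest : rest = [] := List.getLast?_eq_none_iff.1 (by simpa using hlast)
    subst hrest
    exact ⟨(0, 0, 0), by simp [fronts, initFront], le_refl _⟩
  | append_singleton pre' c ih =>
    intro rest hdec
    have hpre' : ∀ x ∈ pre', x ∈ P.Vc := fun x hx => hpre x (List.mem_append_left _ hx)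
    have hcVc : c ∈ P.Vc := hpre c (List.mem_append_right _ (List.mem_singleton.2 rfl))
    have hcd : c ≠ P.dep := fun h => hdepC (h ▸ hcVc)
    obtain ⟨hmem, hfil, hlast, hok⟩ := hdec
    obtain ⟨A, B, rfl, hfA, hfB⟩ := filter_split (fun v => decide (v ∈ P.Vc)) rest pre' c hfil
    have hlastc : (A ++ c :: B).getLast? = some c := by
      rw [hlast, List.getLast?_concat]
    have hBnil : B = [] := by
      rcases B.eq_nil_or_concat with h | ⟨B', b, hB⟩
      · exact h
      · exfalso
        subst hB
        have h1 : (A ++ c :: B'.concat b).getLast? = some b := by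
          rw [show A ++ c :: B'.concat b = (A ++ c :: B') ++ [b] by
            simp [List.concat_eq_append]]
          exact List.getLast?_concat
        rw [hlastc] at h1
        have hcb : c = b := Option.some.inj h1
        have hbnc := List.filter_eq_nil_iff.1 hfB b (by simp)
        rw [← hcb] at hbnc
        simp [hcVc] at hbnc
    subst hBnil
    have hdecomp : ∃ rest₀ S, A = rest₀ ++ S ∧
        rest₀.filter (fun v => decide (v ∈ P.Vc)) = pre' ∧
        rest₀.getLast? = pre'.getLast? ∧
        (∀ x ∈ S, x ∉ P.Vc) ∧
        (rest₀ = [] ∨ rest₀.getLastD P.dep ∈ P.Vc) := by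
      rcases pre'.eq_nil_or_concat with rfl | ⟨pre'', c', hp'⟩
      · refine ⟨[], A, rfl, rfl, rfl, ?_, Or.inl rfl⟩
        intro x hx
        have := List.filter_eq_nil_iff.1 hfA x hx
        simpa using this
      · subst hp'
        obtain ⟨A₀, S₀, rfl, hfA₀, hfS₀⟩ := filter_split _ A pre'' c'
          (by simpa [List.concat_eq_append] using hfA)
        have hc'Vc : c' ∈ P.Vc := hpre' c' (by simp [List.concat_eq_append])
        refine ⟨A₀ ++ [c'], S₀, by simp, ?_, ?_, ?_, Or.inr ?_⟩
        · rw [List.filter_append, hfA₀]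
          simp [List.concat_eq_append, hc'Vc]
        · rw [List.getLast?_concat, List.concat_eq_append, List.getLast?_concat]
        · intro x hx
          have := List.filter_eq_nil_iff.1 hfS₀ x hx
          simpa using this
        · rw [List.getLastD_concat]; exact hc'Vc
    obtain ⟨rest₀, S, hAeq, hfil₀, hlast₀, hSnc, hprevc⟩ := hdecomp
    subst hAeq
    have hS : ∀ x ∈ S, x ∈ stations P := by
      intro x hx
      have hx1 : x ∈ (rest₀ ++ S) ++ c :: [] := by simp [hx]
      rcases hmem x hx1 with h1 | h1 | h1
      · exact absurd h1 (hSnc x hx)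
      · exact (mem_stations_iff P).2 (Or.inr h1)
      · exact (mem_stations_iff P).2 (Or.inl h1)
    have hrest : (rest₀ ++ S) ++ c :: [] = rest₀ ++ (S ++ [c]) := by simp
    rw [hrest] at hok ⊢
    rw [runOK_append] at hok
    set prev := rest₀.getLastD P.dep with hprev
    set L0 := runState P (0, 0, 0) P.dep rest₀ with hL0
    have hmem₀ : ∀ v ∈ rest₀, v ∈ P.Vc ∨ v ∈ P.Vf ∨ v = P.dep := fun v hv =>
      hmem v (by simp [hv])
    obtain ⟨Lf, hLfmem, hLfle⟩ := ih hpre' rest₀ ⟨hmem₀, hfil₀, hlast₀, hok.1⟩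
    have hflag : (if prev = P.dep ∨ prev ∈ P.Vf then 0 else L0.2.2) = L0.2.2 := by
      rcases hprevc with h1 | h1
      · simp [hprev, hL0, h1, runState]
      · have hnd' : prev ≠ P.dep := fun h => hdepC (h ▸ h1)
        have hnf : prev ∉ P.Vf := fun h => (Finset.disjoint_left.1 hdisj) h1 h
        rw [if_neg (by tauto)]
    obtain ⟨L', hL'c, hL'le⟩ := seg P hsymm hnn hdemVf L0 prev hflag S hS c hcd hok.2
    obtain ⟨L'', hL''c, hL''le⟩ := candidates_mono P hsymm prev c hLfle hL'c
    have hbig : L'' ∈ {x | ∃ L ∈ fronts P hsymm P.dep pre' initFront,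
        x ∈ candidates P hsymm prev c L} := ⟨Lf, hLfmem, hL''c⟩
    have hfin := genSet_finite P hsymm prev c
      (fronts_finite P hsymm pre' P.dep (show initFront.Finite from Set.finite_singleton _))
    obtain ⟨y, hy, hyle⟩ := exists_minimal_le hfin hbig
    refine ⟨y, ?_, ?_⟩
    · rw [fronts_append]
      have hpp : pre'.getLastD P.dep = prev := by
        rw [hprev, List.getLastD_eq_getLast?, List.getLastD_eq_getLast?, hlast₀]
      rw [hpp]
      exact hy
    · calc y ≤ L'' := hyle
        _ ≤ L' := hL''le
        _ ≤ runState P L0 prev (S ++ [c]) := hL'le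
        _ = runState P (0, 0, 0) P.dep (rest₀ ++ (S ++ [c])) :=
          (runState_append P (0, 0, 0) P.dep rest₀ (S ++ [c])).symm

end FPSCP
end
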